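/- arXiv:2403.03668 — 4 statements merged into one kernel-verified Lean document; each statement's English description precedes it below -/
import Mathlib

section
/- Let G be an s-connected finite simple graph whose independence number is less than s + 2. Then G has a Hamiltonian path. -/
open SimpleGraph

variable {V : Type*}

/-- `G` has independence number at most `k`: every independent set has at most `k` vertices. -/
def IndepBound (G : SimpleGraph V) (k : ℕ) : Prop :=
  ∀ s : Finset V, (∀ a ∈ s, ∀ b ∈ s, a ≠ b → ¬ G.Adj a b) → s.card ≤ k

/-- The induced subgraph on `A` has independence number at most `k`. -/
def IndepBoundOn (G : SimpleGraph V) (A : Set V) (k : ℕ) : Prop :=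
  ∀ s : Finset V, ↑s ⊆ A → (∀ a ∈ s, ∀ b ∈ s, a ≠ b → ¬ G.Adj a b) → s.card ≤ k

/-- `x` is a cut vertex (articulation point): `G - x` is disconnected. -/
def IsCutVertex (G : SimpleGraph V) (x : V) : Prop :=
  ¬ (G.induce ({x}ᶜ : Set V)).Preconnected

/-- `S` is a vertex cut: `G - S` is disconnected. -/
def IsCutSet (G : SimpleGraph V) (S : Set V) : Prop :=
  ¬ (G.induce Sᶜ).Preconnected

/-- `G` has a Hamiltonian path with endpoints `u` and `v`. -/
def HasHamPathBetween [DecidableEq V] (G : SimpleGraph V) (u v : V) : Prop :=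
  ∃ p : G.Walk u v, p.IsHamiltonian

/-- `G` has a Hamiltonian path starting at `u`. -/
def HasHamPathFrom [DecidableEq V] (G : SimpleGraph V) (u : V) : Prop :=
  ∃ v, ∃ p : G.Walk u v, p.IsHamiltonian

/-- `G` has a Hamiltonian path. -/
def HasHamPath [DecidableEq V] (G : SimpleGraph V) : Prop :=
  ∃ u v, ∃ p : G.Walk u v, p.IsHamiltonian

/-- `G` has a path cover of size two: two vertex-disjoint paths, one starting at `u`
and the other starting at `v`, whose vertex sets partition `V(G)`. -/
def HasPathCover2 (G : SimpleGraph V) (u v : V) : Prop :=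
  ∃ (a b : V) (p : G.Walk u a) (q : G.Walk v b), p.IsPath ∧ q.IsPath ∧
    ∀ w, (w ∈ p.support ∧ w ∉ q.support) ∨ (w ∈ q.support ∧ w ∉ p.support)

/-- `G` is `s`-connected: more than `s` vertices, and removing any fewer than `s`
vertices leaves the graph connected. -/
def SConnected (G : SimpleGraph V) (s : ℕ) : Prop :=
  s < Nat.card V ∧ ∀ S : Set V, S.ncard < s → (G.induce Sᶜ).Connected


section CEHelpers
open List

lemma takeLast' {α : Type*} (l : List α) (i : ℕ) (h : i < l.length) :
    (l.take (i+1)).getLast? = some (l[i]'h) := by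
  rw [List.take_succ, List.getElem?_eq_getElem h]
  show ((l.take i) ++ [l[i]'h]).getLast? = some (l[i]'h)
  exact List.getLast?_concat

lemma headTake {α : Type*} (l : List α) (n : ℕ) (hn : n ≠ 0) :
    (l.take n).head? = l.head? := by
  cases l with
  | nil => simp
  | cons a t => cases n with
    | zero => omega
    | succ m => simp

lemma getElem_idx_congr {α : Type*} (l : List α) {i j : ℕ} (h : i = j)
    (hi : i < l.length) (hj : j < l.length) : l[i]'hi = l[j]'hj := by
  have h2 : l[i]? = l[j]? := by rw [h]
  rw [List.getElem?_eq_getElem hi, List.getElem?_eq_getElem hj] at h2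
  exact Option.some.inj h2

lemma chain'_rev {G : SimpleGraph V} {l : List V} (h : l.IsChain G.Adj) :
    l.reverse.IsChain G.Adj := by
  rw [List.isChain_reverse]
  exact h.imp (fun a b hab => hab.symm)

lemma getLast?_cons_ne {α : Type*} (x : α) (t : List α) (ht : t ≠ []) :
    (x :: t).getLast? = t.getLast? := by
  cases t with
  | nil => simp at ht
  | cons a s => simp [List.getLast?_cons_cons]

/-- Build a walk whose support is a given nonempty adjacency chain. -/
lemma exists_walk_support (G : SimpleGraph V) :
    ∀ l : List V, l ≠ [] → l.IsChain G.Adj → ∃ u v, ∃ p : G.Walk u v, p.support = l := by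
  intro l
  induction l with
  | nil => simp
  | cons a t ih =>
    intro _ hch
    cases t with
    | nil => exact ⟨a, a, Walk.nil, rfl⟩
    | cons b t' =>
      obtain ⟨hab, hch'⟩ := List.isChain_cons_cons.mp hch
      obtain ⟨u, v, p, hp⟩ := ih (by simp) hch'
      have hub : u = b := by
        have := p.support_eq_cons
        rw [hp] at this
        exact (List.cons.injEq _ _ _ _ ▸ this).1.symm
      subst hub
      exact ⟨a, v, Walk.cons hab p, by simp [hp]⟩

section Surgery

variable {G : SimpleGraph V} {l : List V}

/-- No vertex outside a maximum nodup chain is adjacent to its head. -/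
lemma no_head_ext (hnd : l.Nodup) (hch : l.IsChain G.Adj)
    (hmax : ∀ m : List V, m.Nodup → m.IsChain G.Adj → m.length ≤ l.length)
    (hne : l ≠ []) (z : V) (hz : z ∉ l) : ¬ G.Adj z (l.head hne) := by
  intro ha
  have h1 : (z :: l).Nodup := List.nodup_cons.mpr ⟨hz, hnd⟩
  have h2 : (z :: l).IsChain G.Adj := List.isChain_cons.mpr
    ⟨fun y hy => by rw [List.head?_eq_head hne] at hy; cases hy; exact ha, hch⟩
  have := hmax _ h1 h2
  simp at this

lemma no_last_ext (hnd : l.Nodup) (hch : l.IsChain G.Adj)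
    (hmax : ∀ m : List V, m.Nodup → m.IsChain G.Adj → m.length ≤ l.length)
    (hne : l ≠ []) (z : V) (hz : z ∉ l) : ¬ G.Adj (l.getLast hne) z := by
  intro ha
  have hrne : l.reverse ≠ [] := by simpa using hne
  have := no_head_ext (l := l.reverse) (List.nodup_reverse.mpr hnd) (chain'_rev hch)
    (fun m h1 h2 => by rw [List.length_reverse]; exact hmax m h1 h2) hrne z
    (by simpa using hz)
  rw [List.head_reverse] at this
  exact this ha.symm

/-- Surgery B : head adjacent to the successor of a vertex with an outside neighbour. -/
lemma surgeryB (hnd : l.Nodup) (hch : l.IsChain G.Adj)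
    (hmax : ∀ m : List V, m.Nodup → m.IsChain G.Adj → m.length ≤ l.length)
    (hne : l ≠ []) (i : ℕ) (hi : i + 1 < l.length) (h : V) (hh : h ∉ l)
    (ha1 : G.Adj (l[i]'(by omega)) h)
    (ha2 : G.Adj (l.head hne) (l[i+1]'hi)) : False := by
  set L : List V := (h :: (l.take (i+1)).reverse) ++ l.drop (i+1) with hL
  have htne : l.take (i+1) ≠ [] := by
    apply List.ne_nil_of_length_pos
    rw [List.length_take]; omega
  have hrne : (l.take (i+1)).reverse ≠ [] := by simpa using htne
  have hch' : L.IsChain G.Adj := by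
    rw [List.isChain_append]
    refine ⟨?_, hch.drop _, ?_⟩
    · rw [List.isChain_cons]
      refine ⟨?_, chain'_rev (hch.take _)⟩
      intro y hy
      rw [List.head?_reverse, takeLast' l i (by omega)] at hy
      cases hy; exact ha1.symm
    · intro x hx y hy
      rw [getLast?_cons_ne _ _ hrne, List.getLast?_reverse,
        headTake l (i+1) (by omega), List.head?_eq_head hne] at hx
      rw [List.head?_drop, List.getElem?_eq_getElem hi] at hy
      cases hx; cases hy; exact ha2
  have hperm : L.Perm (h :: l) := by
    have h1 : ((l.take (i+1)).reverse ++ l.drop (i+1)).Perm l := by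
      calc ((l.take (i+1)).reverse ++ l.drop (i+1)).Perm (l.take (i+1) ++ l.drop (i+1)) :=
            (List.reverse_perm _).append_right _
        _ = l := List.take_append_drop _ _
    exact h1.cons h
  have hnd' : L.Nodup := hperm.nodup_iff.mpr (List.nodup_cons.mpr ⟨hh, hnd⟩)
  have := hmax L hnd' hch'
  have hl := hperm.length_eq
  simp at hl
  omega

/-- Surgery C : the successor of a vertex with an outside neighbour has an outside
neighbour in the same outside component. -/
lemma surgeryC (hnd : l.Nodup) (hch : l.IsChain G.Adj)
    (hmax : ∀ m : List V, m.Nodup → m.IsChain G.Adj → m.length ≤ l.length)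
    (i : ℕ) (hi : i + 1 < l.length) (c : List V) (hcne : c ≠ []) (hcnd : c.Nodup)
    (hcch : c.IsChain G.Adj) (hdisj : ∀ z ∈ c, z ∉ l) (h h' : V)
    (hc1 : c.head? = some h) (hc2 : c.getLast? = some h')
    (ha1 : G.Adj (l[i]'(by omega)) h) (ha2 : G.Adj h' (l[i+1]'hi)) : False := by
  set L : List V := l.take (i+1) ++ (c ++ l.drop (i+1)) with hL
  have hch' : L.IsChain G.Adj := by
    rw [List.isChain_append]
    refine ⟨hch.take _, ?_, ?_⟩
    · rw [List.isChain_append]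
      refine ⟨hcch, hch.drop _, ?_⟩
      intro x hx y hy
      rw [hc2] at hx
      rw [List.head?_drop, List.getElem?_eq_getElem hi] at hy
      cases hx; cases hy; exact ha2
    · intro x hx y hy
      rw [takeLast' l i (by omega)] at hx
      rw [List.head?_append, hc1] at hy
      cases hx; cases hy; exact ha1
  have hperm : L.Perm (l ++ c) := by
    calc L.Perm (l.take (i+1) ++ (l.drop (i+1) ++ c)) :=
          (List.perm_append_comm).append_left _
      _ = (l.take (i+1) ++ l.drop (i+1)) ++ c := (List.append_assoc _ _ _).symm
      _ = l ++ c := by rw [List.take_append_drop]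
  have hnd' : L.Nodup := hperm.nodup_iff.mpr
    (List.nodup_append'.mpr ⟨hnd, hcnd, fun a ha hac => hdisj a hac ha⟩)
  have := hmax L hnd' hch'
  have hl := hperm.length_eq
  simp at hl
  have : c.length ≠ 0 := by simpa using hcne
  omega

/-- Surgery D : successors of two vertices with outside neighbours are nonadjacent. -/
lemma surgeryD (hnd : l.Nodup) (hch : l.IsChain G.Adj)
    (hmax : ∀ m : List V, m.Nodup → m.IsChain G.Adj → m.length ≤ l.length)
    (i j : ℕ) (hij : i + 1 < j) (hj : j + 1 < l.length)
    (c : List V) (hcne : c ≠ []) (hcnd : c.Nodup)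
    (hcch : c.IsChain G.Adj) (hdisj : ∀ z ∈ c, z ∉ l) (h h' : V)
    (hc1 : c.head? = some h) (hc2 : c.getLast? = some h')
    (ha1 : G.Adj (l[i]'(by omega)) h) (ha2 : G.Adj h' (l[j]'(by omega)))
    (ha3 : G.Adj (l[i+1]'(by omega)) (l[j+1]'hj)) : False := by
  set seg : List V := (l.drop (i+1)).take (j-i) with hseg
  set L : List V := l.take (i+1) ++ (c ++ (seg.reverse ++ l.drop (j+1))) with hL
  have hdl : (l.drop (i+1)).length = l.length - (i+1) := by rw [List.length_drop]
  have hsegl : seg.length = j - i := by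
    rw [hseg, List.length_take, hdl]; omega
  have hsegne : seg ≠ [] := by
    apply List.ne_nil_of_length_pos; omega
  have hsegrne : seg.reverse ≠ [] := by simpa using hsegne
  -- getLast? of seg is l[j]
  have hsl : seg.getLast? = some (l[j]'(by omega)) := by
    have e1 : j - i = (j - i - 1) + 1 := by omega
    rw [hseg, e1, takeLast' (l.drop (i+1)) (j-i-1) (by omega)]
    congr 1
    rw [List.getElem_drop]
    exact getElem_idx_congr l (by omega) _ _
  have hsh : seg.head? = some (l[i+1]'(by omega)) := by
    rw [hseg, headTake _ _ (by omega), List.head?_drop, List.getElem?_eq_getElem]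
  have hch' : L.IsChain G.Adj := by
    rw [List.isChain_append]
    refine ⟨hch.take _, ?_, ?_⟩
    · rw [List.isChain_append]
      refine ⟨hcch, ?_, ?_⟩
      · rw [List.isChain_append]
        refine ⟨chain'_rev ((hch.drop _).take _), hch.drop _, ?_⟩
        intro x hx y hy
        rw [List.getLast?_reverse, hsh] at hx
        rw [List.head?_drop, List.getElem?_eq_getElem hj] at hy
        cases hx; cases hy; exact ha3
      · intro x hx y hy
        rw [hc2] at hx
        rw [List.head?_append, List.head?_reverse, hsl] at hy
        cases hx; cases hy; exact ha2
    · intro x hx y hy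
      rw [takeLast' l i (by omega)] at hx
      rw [List.head?_append, hc1] at hy
      cases hx; cases hy; exact ha1
  have hdec : seg ++ l.drop (j+1) = l.drop (i+1) := by
    have h1 := List.take_append_drop (j-i) (l.drop (i+1))
    rw [List.drop_drop] at h1
    have e2 : i + 1 + (j - i) = j + 1 := by omega
    rw [e2] at h1
    exact h1
  have hperm : L.Perm (l ++ c) := by
    calc L.Perm (l.take (i+1) ++ (c ++ (seg ++ l.drop (j+1)))) :=
          ((((List.reverse_perm seg).append_right _)).append_left c).append_left _
      _ ~ l.take (i+1) ++ ((seg ++ l.drop (j+1)) ++ c) :=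
          (List.perm_append_comm).append_left _
      _ = (l.take (i+1) ++ (seg ++ l.drop (j+1))) ++ c := (List.append_assoc _ _ _).symm
      _ = (l.take (i+1) ++ l.drop (i+1)) ++ c := by rw [hdec]
      _ = l ++ c := by rw [List.take_append_drop]
  have hnd' : L.Nodup := hperm.nodup_iff.mpr
    (List.nodup_append'.mpr ⟨hnd, hcnd, fun a ha hac => hdisj a hac ha⟩)
  have := hmax L hnd' hch'
  have hl := hperm.length_eq
  simp at hl
  have : c.length ≠ 0 := by simpa using hcne
  omega

end Surgery

lemma nodup_getElem_inj {α : Type*} {l : List α} (h : l.Nodup) {i j : ℕ}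
    (hi : i < l.length) (hj : j < l.length) (he : l[i]'hi = l[j]'hj) : i = j := by
  have h2 := List.Nodup.get_inj_iff h (i := ⟨i, hi⟩) (j := ⟨j, hj⟩)
  simp only [List.get_eq_getElem] at h2
  exact Fin.mk.inj_iff.mp (h2.mp he)

end CEHelpers


/-- Chvátal–Erdős: an s-connected graph with independence number less than s + 2 has a
Hamiltonian path. -/
theorem stmt_14 [Fintype V] [DecidableEq V] (G : SimpleGraph V) (s : ℕ) (hs : 1 ≤ s)
    (hG : SConnected G s) (hα : IndepBound G (s + 1)) :
    HasHamPath G := by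
  classical
  obtain ⟨hcard, hcut⟩ := hG
  rw [Nat.card_eq_fintype_card] at hcard
  -- choose a maximum-length nodup adjacency chain
  have hbdd : BddAbove {n | ∃ m : List V, m.Nodup ∧ m.IsChain G.Adj ∧ m.length = n} := by
    refine ⟨Fintype.card V, ?_⟩
    rintro n ⟨m, hm, -, rfl⟩
    exact hm.length_le_card
  obtain ⟨l, hnd, hch, hlen⟩ :=
    Nat.sSup_mem (s := {n | ∃ m : List V, m.Nodup ∧ m.IsChain G.Adj ∧ m.length = n})
      ⟨0, ([] : List V), by simp⟩ hbdd
  have hmax : ∀ m : List V, m.Nodup → m.IsChain G.Adj → m.length ≤ l.length := by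
    intro m h1 h2
    rw [hlen]
    exact le_csSup hbdd ⟨m, h1, h2, rfl⟩
  have hlV : l.length ≤ Fintype.card V := hnd.length_le_card
  by_cases hall : l.length = Fintype.card V
  · -- the chain is Hamiltonian
    have hne : l ≠ [] := by
      apply List.ne_nil_of_length_pos
      omega
    obtain ⟨u, v, p, hp⟩ := exists_walk_support G l hne hch
    refine ⟨u, v, p, ?_⟩
    intro a
    have hmem : a ∈ l := by
      have h1 : l.toFinset.card = l.length := List.toFinset_card_of_nodup hnd
      have h2 : l.toFinset = Finset.univ := Finset.eq_univ_of_card _ (by rw [h1, hall])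
      rw [← List.mem_toFinset, h2]
      exact Finset.mem_univ a
    show p.support.count a = 1
    rw [hp]
    exact List.count_eq_one_of_mem hnd hmem
  · exfalso
    have hlt : l.length < Fintype.card V := lt_of_le_of_ne hlV hall
    obtain ⟨y, hy⟩ : ∃ y, y ∉ l := by
      by_contra hc
      push_neg at hc
      have h1 : Finset.univ ⊆ l.toFinset := fun a _ => List.mem_toFinset.mpr (hc a)
      have h2 := Finset.card_le_card h1
      rw [List.toFinset_card_of_nodup hnd, Finset.card_univ] at h2
      omega
    have hne : l ≠ [] := by
      apply List.ne_nil_of_length_pos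
      have := hmax [y] (by simp) (by simp)
      simp at this
      omega
    -- the component of y outside l
    set Hs : Set V := {v | ∃ w : G.Walk y v, ∀ z ∈ w.support, z ∉ l} with hHsdef
    have hyH : y ∈ Hs := ⟨Walk.nil, by simpa using hy⟩
    have hHl : ∀ v ∈ Hs, v ∉ l := by
      rintro v ⟨w, hw⟩
      exact hw v w.end_mem_support
    have hHext : ∀ v ∈ Hs, ∀ u, G.Adj v u → u ∉ l → u ∈ Hs := by
      rintro v ⟨w, hw⟩ u hadj hu
      refine ⟨w.concat hadj, ?_⟩
      intro z hz
      rw [Walk.support_concat] at hz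
      rcases (by simpa using hz : z ∈ w.support ∨ z = u) with h | h
      · exact hw z h
      · exact h ▸ hu
    have hHpath : ∀ h1 ∈ Hs, ∀ h2 ∈ Hs, ∃ c : List V, c ≠ [] ∧ c.Nodup ∧
        c.IsChain G.Adj ∧ c.head? = some h1 ∧ c.getLast? = some h2 ∧ ∀ z ∈ c, z ∉ l := by
      rintro h1 ⟨w1, hw1⟩ h2 ⟨w2, hw2⟩
      have hwp : (w1.reverse.append w2).bypass.IsPath := Walk.bypass_isPath _
      set w : G.Walk h1 h2 := (w1.reverse.append w2).bypass with hwdef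
      refine ⟨w.support, w.support_ne_nil, hwp.support_nodup,
        w.isChain_adj_support, ?_, ?_, ?_⟩
      · rw [w.support_eq_cons]; rfl
      · have e1 : w.support.getLast? = w.reverse.support.head? := by
          rw [Walk.support_reverse, List.head?_reverse]
        rw [e1, w.reverse.support_eq_cons]; rfl
      · intro z hz hzl
        have hz' : z ∈ (w1.reverse.append w2).support :=
          Walk.support_bypass_subset _ hz
        rw [Walk.support_append] at hz'
        rcases List.mem_append.mp hz' with h | h
        · rw [Walk.support_reverse] at h
          exact hw1 z (List.mem_reverse.mp h) hzl
        · exact hw2 z (List.mem_of_mem_tail h) hzl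
    -- the cut set
    set Nf : Finset V := Finset.univ.filter (fun v => v ∈ l ∧ ∃ h ∈ Hs, G.Adj v h) with hNfdef
    have hmemNf : ∀ v, v ∈ Nf ↔ v ∈ l ∧ ∃ h ∈ Hs, G.Adj v h := by
      intro v
      rw [hNfdef, Finset.mem_filter]
      simp
    have hheadN : l.head hne ∉ Nf := by
      intro hmem
      obtain ⟨-, h, hH, hadj⟩ := (hmemNf _).mp hmem
      exact no_head_ext hnd hch hmax hne h (hHl h hH) hadj.symm
    have hlastN : l.getLast hne ∉ Nf := by
      intro hmem
      obtain ⟨-, h, hH, hadj⟩ := (hmemNf _).mp hmem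
      exact no_last_ext hnd hch hmax hne h (hHl h hH) hadj
    have hyN : y ∉ Nf := fun hmem => hy ((hmemNf _).mp hmem).1
    have hcutN : ¬ (G.induce (↑Nf : Set V)ᶜ).Preconnected := by
      intro hpc
      have hyc : y ∈ (↑Nf : Set V)ᶜ := by simpa using hyN
      have hhc : l.head hne ∈ (↑Nf : Set V)ᶜ := by simpa using hheadN
      have key : ∀ (u t : ((↑Nf : Set V)ᶜ : Set V))
          (w : (G.induce ((↑Nf : Set V)ᶜ)).Walk u t), (t : V) ∈ Hs → (u : V) ∈ Hs := by
        intro u t w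
        induction w with
        | nil => exact id
        | @cons a b c hadj p ih =>
          intro ht
          have hbH : (b : V) ∈ Hs := ih ht
          have hab : G.Adj (a : V) (b : V) := hadj
          by_cases hal : (a : V) ∈ l
          · exfalso
            have h1 : (a : V) ∈ Nf := (hmemNf _).mpr ⟨hal, ⟨b, hbH, hab⟩⟩
            exact a.2 (Finset.mem_coe.mpr h1)
          · exact hHext _ hbH _ hab.symm hal
      obtain ⟨w⟩ := hpc ⟨l.head hne, hhc⟩ ⟨y, hyc⟩
      exact hHl _ (key _ _ w hyH) (List.head_mem hne)
    have hNcard : s ≤ Nf.card := by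
      by_contra hc
      push_neg at hc
      have := hcut (↑Nf : Set V) (by rw [Set.ncard_coe_finset]; omega)
      exact hcutN this.preconnected
    -- the successor function
    have hidx : ∀ v ∈ Nf, l.idxOf v + 1 < l.length := by
      intro v hv
      have hvl : v ∈ l := ((hmemNf _).mp hv).1
      have h1 : l.idxOf v < l.length := List.idxOf_lt_length_iff.mpr hvl
      by_contra hc
      have h2 : l.idxOf v = l.length - 1 := by omega
      have h3 : v = l.getLast hne := by
        conv_lhs => rw [← List.getElem_idxOf h1]
        rw [List.getLast_eq_getElem]
        exact getElem_idx_congr l (by omega) _ _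
      exact hlastN (h3 ▸ hv)
    set sig : V → V := fun v => l.getD (l.idxOf v + 1) v with hsigdef
    have hsig_spec : ∀ v ∈ Nf, ∃ hi : l.idxOf v + 1 < l.length,
        (l[l.idxOf v]'(by omega) = v) ∧ sig v = l[l.idxOf v + 1]'hi := by
      intro v hv
      refine ⟨hidx v hv, List.getElem_idxOf _, ?_⟩
      rw [hsigdef]
      exact List.getD_eq_getElem l v (hidx v hv)
    -- claims
    have claimC : ∀ v ∈ Nf, ∀ h' ∈ Hs, ¬ G.Adj (sig v) h' := by
      intro v hv h' hH' hadj
      obtain ⟨hi, hvi, hsv⟩ := hsig_spec v hv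
      obtain ⟨-, h, hH, hvh⟩ := (hmemNf _).mp hv
      obtain ⟨c, hcne, hcnd, hcch, hc1, hc2, hcdisj⟩ := hHpath h hH h' hH'
      refine surgeryC hnd hch hmax (l.idxOf v) hi c hcne hcnd hcch hcdisj h h' hc1 hc2
        ?_ ?_
      · rw [hvi]; exact hvh
      · rw [← hsv]; exact hadj.symm
    have claimB : ∀ v ∈ Nf, ¬ G.Adj (l.head hne) (sig v) := by
      intro v hv hadj
      obtain ⟨hi, hvi, hsv⟩ := hsig_spec v hv
      obtain ⟨-, h, hH, hvh⟩ := (hmemNf _).mp hv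
      refine surgeryB hnd hch hmax hne (l.idxOf v) hi h (hHl h hH) ?_ ?_
      · rw [hvi]; exact hvh
      · rw [← hsv]; exact hadj
    have claimD : ∀ v ∈ Nf, ∀ w ∈ Nf, sig v ≠ sig w → ¬ G.Adj (sig v) (sig w) := by
      have main : ∀ v ∈ Nf, ∀ w ∈ Nf, l.idxOf v < l.idxOf w →
          ¬ G.Adj (sig v) (sig w) := by
        intro v hv w hw hij hadj
        obtain ⟨hi, hvi, hsv⟩ := hsig_spec v hv
        obtain ⟨hj, hwj, hsw⟩ := hsig_spec w hw
        obtain ⟨-, hv2, hvH, hvadj⟩ := (hmemNf _).mp hv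
        obtain ⟨-, hw2, hwH, hwadj⟩ := (hmemNf _).mp hw
        by_cases hji : l.idxOf w = l.idxOf v + 1
        · -- consecutive: sig v = w, contradicting claimC
          have h1 : sig v = w := by
            rw [hsv, ← hwj]
            exact getElem_idx_congr l hji.symm _ _
          exact claimC v hv hw2 hwH (by rw [h1]; exact hwadj)
        · have hij2 : l.idxOf v + 1 < l.idxOf w := by omega
          obtain ⟨c, hcne, hcnd, hcch, hc1, hc2, hcdisj⟩ := hHpath hv2 hvH hw2 hwH
          refine surgeryD hnd hch hmax (l.idxOf v) (l.idxOf w) hij2 hj c hcne hcnd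
            hcch hcdisj _ _ hc1 hc2 ?_ ?_ ?_
          · rw [hvi]; exact hvadj
          · rw [hwj]; exact hwadj.symm
          · rw [← hsv, ← hsw]; exact hadj
      intro v hv w hw hvw hadj
      rcases lt_trichotomy (l.idxOf v) (l.idxOf w) with h | h | h
      · exact main v hv w hw h hadj
      · obtain ⟨hi, hvi, -⟩ := hsig_spec v hv
        obtain ⟨hj, hwj, -⟩ := hsig_spec w hw
        have hvw' : v = w := by
          rw [← hvi, ← hwj]
          exact getElem_idx_congr l h _ _
        exact hvw (by rw [hvw'])
      · exact main w hw v hv h hadj.symm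
    -- the independent set
    set T : Finset V := insert y (insert (l.head hne) (Nf.image sig)) with hTdef
    have hinj : Set.InjOn sig ↑Nf := by
      intro v hv w hw he
      obtain ⟨hi, hvi, hsv⟩ := hsig_spec v (Finset.mem_coe.mp hv)
      obtain ⟨hj, hwj, hsw⟩ := hsig_spec w (Finset.mem_coe.mp hw)
      rw [hsv, hsw] at he
      have h1 := nodup_getElem_inj hnd _ _ he
      rw [← hvi, ← hwj]
      exact getElem_idx_congr l (by omega) _ _
    have hheadim : l.head hne ∉ Nf.image sig := by
      intro hmem
      obtain ⟨v, hv, hsv⟩ := Finset.mem_image.mp hmem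
      obtain ⟨hi, hvi, hsv2⟩ := hsig_spec v hv
      rw [hsv2] at hsv
      have h0 : l.head hne = l[0]'(by omega) := List.head_eq_getElem_zero hne
      rw [h0] at hsv
      have := nodup_getElem_inj hnd _ _ hsv.symm
      omega
    have hyim : y ∉ insert (l.head hne) (Nf.image sig) := by
      intro hmem
      rcases Finset.mem_insert.mp hmem with h | h
      · exact hy (h ▸ List.head_mem hne)
      · obtain ⟨v, hv, hsv⟩ := Finset.mem_image.mp h
        obtain ⟨hi, hvi, hsv2⟩ := hsig_spec v hv
        refine hy ?_
        rw [← hsv, hsv2]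
        exact List.getElem_mem _
    have hTcard : T.card = Nf.card + 2 := by
      rw [hTdef, Finset.card_insert_of_notMem hyim, Finset.card_insert_of_notMem hheadim,
        Finset.card_image_of_injOn hinj]
    have hhy : ¬ G.Adj (l.head hne) y := fun h =>
      no_head_ext hnd hch hmax hne y hy h.symm
    have hTind : ∀ a ∈ T, ∀ b ∈ T, a ≠ b → ¬ G.Adj a b := by
      intro a ha b hb hab hadj
      rw [hTdef] at ha hb
      simp only [Finset.mem_insert, Finset.mem_image] at ha hb
      rcases ha with ha | ha | ⟨v, hv, ha⟩ <;> rcases hb with hb | hb | ⟨w, hw, hb⟩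
      · exact hab (by rw [ha, hb])
      · exact hhy (by rw [ha, hb] at hadj; exact hadj.symm)
      · exact claimC w hw y hyH (by rw [ha, ← hb] at hadj; exact hadj.symm)
      · exact hhy (by rw [ha, hb] at hadj; exact hadj)
      · exact hab (by rw [ha, hb])
      · exact claimB w hw (by rw [ha, ← hb] at hadj; exact hadj)
      · exact claimC v hv y hyH (by rw [← ha, hb] at hadj; exact hadj)
      · exact claimB v hv (by rw [← ha, hb] at hadj; exact hadj.symm)
      · exact claimD v hv w hw (fun hh => hab ((ha.symm.trans hh).trans hb))
          (by rw [← ha, ← hb] at hadj; exact hadj)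
    have := hα T hTind
    omega
end

section
/- Let G be an s-connected finite simple graph whose independence number is at most s. Then G has a Hamiltonian cycle. -/
/-!
Take a longest cycle `C` (cycles exist because `s`-connectivity and `α ≤ s` force minimum degree
at least two) and suppose that a vertex `v` misses it. Let `K` be the component of `v` in `G - V(C)`,
let `A` be the set of vertices of `C` with a neighbour in `K`, and write `u⁺` for the successor of
`u` on `C`. For `u₁ ≠ u₂` in `A`, an edge `u₁⁺u₂⁺` would give a longer cycle: go from `u₁` through
`K` to `u₂`, back along `C` to `u₁⁺`, across to `u₂⁺` and along `C` to `u₁`. The same detour with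
`u₂ = u₁⁺` shows that no `u⁺` has a neighbour in `K`. Hence `A` does not contain all of `C`, so it
separates `K` from the rest of `G` and `|A| ≥ s`, while `{v} ∪ A⁺` is independent of size `|A| + 1`.
-/

open SimpleGraph

variable {V : Type*}

namespace SimpleGraph

variable {G : SimpleGraph V}

def vertexBoundary (G : SimpleGraph V) (K : Set V) : Set V :=
  {u | u ∉ K ∧ ∃ a ∈ K, G.Adj u a}

def componentAvoiding (G : SimpleGraph V) (S : Set V) (v : V) : Set V :=
  {w | ∃ q : G.Walk v w, ∀ z ∈ q.support, z ∉ S}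

section componentAvoiding

variable {S : Set V} {v a b : V}

lemma self_mem_componentAvoiding (hv : v ∉ S) : v ∈ G.componentAvoiding S v :=
  ⟨Walk.nil, by simpa using hv⟩

lemma notMem_of_mem_componentAvoiding (ha : a ∈ G.componentAvoiding S v) : a ∉ S :=
  let ⟨q, hq⟩ := ha
  hq a q.end_mem_support

lemma vertexBoundary_componentAvoiding_subset :
    G.vertexBoundary (G.componentAvoiding S v) ⊆ S := by
  rintro u ⟨hu, a, ⟨q, hq⟩, hua⟩
  by_contra huS
  refine hu ⟨q.concat hua.symm, fun z hz => ?_⟩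
  rw [Walk.support_concat, List.mem_append, List.mem_singleton] at hz
  rcases hz with hz | rfl
  · exact hq z hz
  · exact huS

lemma exists_isPath_of_mem_componentAvoiding (ha : a ∈ G.componentAvoiding S v)
    (hb : b ∈ G.componentAvoiding S v) :
    ∃ M : G.Walk a b, M.IsPath ∧ ∀ z ∈ M.support, z ∉ S := by
  classical
  obtain ⟨qa, hqa⟩ := ha
  obtain ⟨qb, hqb⟩ := hb
  let W := qa.reverse.append qb
  refine ⟨W.toPath, W.toPath.2, fun z hz => ?_⟩
  rcases (Walk.mem_support_append_iff _ _).1 (W.support_toPath_subset_support hz) with h | h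
  · exact hqa z (by simpa using h)
  · exact hqb z h

end componentAvoiding

lemma Connected.exists_isCycle_of_two_le_degree [Fintype V] [Nontrivial V] [DecidableRel G.Adj]
    (hG : G.Connected) (hdeg : ∀ v, 2 ≤ G.degree v) : ∃ (v : V) (c : G.Walk v v), c.IsCycle := by
  by_contra! h
  obtain ⟨v, hv⟩ := (IsTree.mk hG fun _ c => h _ c).exists_vert_degree_one_of_nontrivial
  have := hdeg v
  omega

lemma exists_isCycle_forall_length_le [Fintype V] (h : ∃ (v : V) (c : G.Walk v v), c.IsCycle) :
    ∃ (r : V) (C : G.Walk r r), C.IsCycle ∧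
      ∀ (w : V) (c : G.Walk w w), c.IsCycle → c.length ≤ C.length := by
  classical
  let P n := ∃ (v : V) (c : G.Walk v v), c.IsCycle ∧ c.length = n
  have hle : ∀ (v : V) (c : G.Walk v v), c.IsCycle → c.length ≤ Fintype.card V := fun _ c hc => by
    have := hc.isPath_tail.length_lt
    rw [← c.length_tail_add_one hc.not_nil]
    omega
  obtain ⟨v, c, hc⟩ := h
  obtain ⟨r, C, hC, hlen⟩ : P (Nat.findGreatest P (Fintype.card V)) :=
    Nat.findGreatest_spec (hle v c hc) ⟨v, c, hc, rfl⟩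
  exact ⟨r, C, hC, fun w c hc => hlen ▸ Nat.le_findGreatest (hle w c hc) ⟨w, c, hc, rfl⟩⟩

end SimpleGraph

section Connectivity

variable {G : SimpleGraph V} {s : ℕ}

lemma SConnected.connected (hG : SConnected G s) (hs : 1 ≤ s) : G.Connected := by
  have h := hG.2 ∅ (by rw [Set.ncard_empty]; omega)
  rw [Set.compl_empty] at h
  exact (induceUnivIso G).connected_iff.1 h

lemma SConnected.le_degree [Fintype V] [DecidableRel G.Adj] (hG : SConnected G s) (v : V) :
    s ≤ G.degree v := by
  classical
  by_contra! hlt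
  set N := G.neighborFinset v
  have hconn := hG.2 (N : Set V) (by rwa [Set.ncard_coe_finset, card_neighborFinset_eq_degree])
  obtain ⟨w, -, hw⟩ : ∃ w ∈ Finset.univ, w ∉ insert v N := by
    apply Finset.exists_mem_notMem_of_card_lt_card
    have := hG.1
    rw [Nat.card_eq_fintype_card] at this
    calc (insert v N).card ≤ N.card + 1 := Finset.card_insert_le _ _
      _ ≤ s := by rw [card_neighborFinset_eq_degree]; omega
      _ < _ := by simpa using this
  rw [Finset.mem_insert, not_or] at hw
  obtain ⟨W⟩ := hconn.preconnected ⟨v, by simp [N]⟩ ⟨w, hw.2⟩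
  have hadj := W.adj_snd (Walk.not_nil_of_ne (by simpa using Ne.symm hw.1))
  exact W.snd.2 (by simpa [N] using hadj)

lemma SConnected.le_ncard_vertexBoundary (hG : SConnected G s) {K : Set V} {k c : V}
    (hk : k ∈ K) (hcK : c ∉ K) (hc : c ∉ G.vertexBoundary K) :
    s ≤ (G.vertexBoundary K).ncard := by
  by_contra! hlt
  obtain ⟨W⟩ := (hG.2 _ hlt).preconnected ⟨k, fun h => h.1 hk⟩ ⟨c, hc⟩
  obtain ⟨d, -, hfst, hsnd⟩ :=
    W.exists_boundary_dart {x : ↥(G.vertexBoundary K)ᶜ | (x : V) ∈ K} hk hcK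
  exact d.snd.2 ⟨hsnd, d.fst, hfst, d.adj.symm⟩

lemma IndepBound.mono {k l : ℕ} (h : IndepBound G k) (hkl : k ≤ l) : IndepBound G l :=
  fun t ht => (h t ht).trans hkl

lemma IndepBound.adj_of_ne (h : IndepBound G 1) {a b : V} (hab : a ≠ b) : G.Adj a b := by
  classical
  by_contra hnadj
  have := h {a, b} (by
    simp only [Finset.mem_insert, Finset.mem_singleton]
    rintro x (rfl | rfl) y (rfl | rfl) hxy
    exacts [absurd rfl hxy, hnadj, fun h => hnadj h.symm, absurd rfl hxy])
  rw [Finset.card_pair hab] at this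
  omega

lemma two_le_degree_of_sConnected_of_indepBound [Fintype V] [DecidableRel G.Adj]
    (hcard : 3 ≤ Fintype.card V) (hG : SConnected G s) (hα : IndepBound G s) (v : V) :
    2 ≤ G.degree v := by
  classical
  rcases le_or_gt 2 s with hs | hs
  · exact hs.trans (hG.le_degree v)
  · have hN : G.neighborFinset v = Finset.univ.erase v := by
      ext w
      simp only [mem_neighborFinset, Finset.mem_erase, Finset.mem_univ, and_true]
      exact ⟨fun h => h.ne', fun h => (hα.mono (by omega : s ≤ 1)).adj_of_ne h.symm⟩
    rw [← card_neighborFinset_eq_degree, hN, Finset.card_erase_of_mem (Finset.mem_univ _),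
      Finset.card_univ]
    omega

end Connectivity

namespace SimpleGraph.Walk

variable {G : SimpleGraph V}

lemma mem_support_tail_iff_of_not_nil {r u : V} {C : G.Walk r r} (hC : ¬ C.Nil) :
    u ∈ C.support.tail ↔ u ∈ C.support := by
  rw [C.mem_support_iff]
  exact ⟨Or.inr, fun h => h.elim (· ▸ end_mem_tail_support hC) id⟩

lemma IsCycle.isHamiltonianCycle_of_forall_mem_support [DecidableEq V] {r : V} {C : G.Walk r r}
    (hC : C.IsCycle) (h : ∀ v, v ∈ C.support) : C.IsHamiltonianCycle :=
  isHamiltonianCycle_isCycle_and_isHamiltonian_tail.2 ⟨hC, hC.isPath_tail.isHamiltonian_of_mem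
    fun v => by
      rw [support_tail_of_not_nil _ hC.not_nil, mem_support_tail_iff_of_not_nil hC.not_nil]
      exact h v⟩

lemma IsPath.isCycle_cons_append_cons {x y a b : V} {P : G.Walk x y} {M : G.Walk a b}
    (hP : P.IsPath) (hM : M.IsPath) (hdisj : M.support.Disjoint P.support) (hxy : x ≠ y)
    (hya : G.Adj y a) (hbx : G.Adj b x) : (cons hya (M.append (cons hbx P))).IsCycle := by
  refine (cons_isCycle_iff _ hya).2 ⟨?_, ?_⟩
  · rw [isPath_def, support_append, support_cons, List.tail_cons]
    exact List.nodup_append.2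
      ⟨hM.support_nodup, hP.support_nodup, fun _ h _ h' e => hdisj h (e ▸ h')⟩
  · rw [edges_append, edges_cons, List.mem_append, List.mem_cons, Sym2.eq_iff]
    rintro (h | (⟨rfl, -⟩ | ⟨rfl, -⟩) | h)
    · exact hdisj (M.fst_mem_support_of_mem_edges h) P.end_mem_support
    · exact hdisj M.end_mem_support P.end_mem_support
    · exact hxy rfl
    · exact hdisj M.start_mem_support (P.snd_mem_support_of_mem_edges h)

lemma IsPath.reverse_append_cons {x u w y : V} {p : G.Walk x u} {q : G.Walk w y}
    {huw : G.Adj u w} (hpq : (p.append (cons huw q)).IsPath) (hxw : G.Adj x w) :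
    (p.reverse.append (cons hxw q)).IsPath := by
  rw [isPath_def, support_append, support_cons, List.tail_cons] at hpq ⊢
  rw [support_reverse]
  exact ((List.reverse_perm _).append_right _).nodup_iff.2 hpq

section Successor

variable [DecidableEq V] {r u : V} {C : G.Walk r r}

noncomputable def succ (C : G.Walk r r) (u : V) : V :=
  if h : ∃ d ∈ C.darts, d.fst = u then h.choose.snd else u

lemma exists_dart_succ (hC : ¬ C.Nil) (hu : u ∈ C.support) :
    ∃ d ∈ C.darts, d.fst = u ∧ d.snd = C.succ u := by
  have h : ∃ d ∈ C.darts, d.fst = u := by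
    have hu' := C.tail_support_perm_dropLast_support.mem_iff.1
      ((mem_support_tail_iff_of_not_nil hC).2 hu)
    rwa [← map_fst_darts, List.mem_map] at hu'
  exact ⟨h.choose, h.choose_spec.1, h.choose_spec.2, by rw [succ, dif_pos h]⟩

lemma IsCycle.snd_eq_succ (hC : C.IsCycle) {d : G.Dart} (hd : d ∈ C.darts) :
    d.snd = C.succ d.fst := by
  obtain ⟨d', hd', hfst, hsnd⟩ :=
    exists_dart_succ hC.not_nil (C.dart_fst_mem_support_of_mem_darts hd)
  have hnodup : (C.darts.map (·.fst)).Nodup := by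
    rw [map_fst_darts]
    exact hC.nodup_dropLast_support
  rw [← hsnd, List.inj_on_of_nodup_map hnodup hd hd' hfst.symm]

lemma IsCycle.adj_succ (hC : C.IsCycle) (hu : u ∈ C.support) : G.Adj u (C.succ u) := by
  obtain ⟨d, -, rfl, hsnd⟩ := exists_dart_succ hC.not_nil hu
  exact hsnd ▸ d.adj

lemma IsCycle.succ_mem_support (hC : C.IsCycle) (hu : u ∈ C.support) :
    C.succ u ∈ C.support := by
  obtain ⟨d, hd, -, hsnd⟩ := exists_dart_succ hC.not_nil hu
  exact hsnd ▸ C.dart_snd_mem_support_of_mem_darts hd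

lemma IsCycle.succ_injOn (hC : C.IsCycle) : Set.InjOn C.succ {u | u ∈ C.support} := by
  intro u₁ hu₁ u₂ hu₂ h
  obtain ⟨d₁, hd₁, rfl, hsnd₁⟩ := exists_dart_succ hC.not_nil hu₁
  obtain ⟨d₂, hd₂, rfl, hsnd₂⟩ := exists_dart_succ hC.not_nil hu₂
  have hnodup : (C.darts.map (·.snd)).Nodup := by
    rw [map_snd_darts]
    exact hC.support_nodup
  rw [List.inj_on_of_nodup_map hnodup hd₁ hd₂ (hsnd₁.trans (h.trans hsnd₂.symm))]

lemma IsCycle.exists_isPath_succ (hC : C.IsCycle) (hu : u ∈ C.support) :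
    ∃ q : G.Walk (C.succ u) u, q.IsPath ∧ q.length + 1 = C.length ∧
      (∀ z, z ∈ q.support ↔ z ∈ C.support) ∧ q.darts ⊆ C.darts := by
  set Cu := C.rotate u hu
  have hCu : Cu.IsCycle := hC.rotate hu
  have hdarts : Cu.darts ⊆ C.darts := fun d hd => (C.rotate_darts u hu).mem_iff.1 hd
  have hsnd : Cu.snd = C.succ u := hC.snd_eq_succ (hdarts (firstDart_mem_darts hCu.not_nil))
  refine ⟨Cu.tail.copy hsnd rfl, by simpa using hCu.isPath_tail, ?_, fun z => ?_, ?_⟩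
  · rw [length_copy, length_tail_add_one hCu.not_nil, length_rotate]
  · rw [support_copy, support_tail_of_not_nil _ hCu.not_nil,
      mem_support_tail_iff_of_not_nil hCu.not_nil, mem_support_rotate_iff]
  · rw [darts_copy, darts_tail]
    exact fun d hd => hdarts (List.mem_of_mem_tail hd)

lemma IsCycle.exists_longer_of_adj_succ (hC : C.IsCycle) {u₁ u₂ a b : V}
    (hu₁ : u₁ ∈ C.support) (hu₂ : u₂ ∈ C.support) (hne : u₁ ≠ u₂)
    (hsucc : G.Adj (C.succ u₁) (C.succ u₂)) (ha : G.Adj u₁ a) (hb : G.Adj b u₂)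
    {M : G.Walk a b} (hM : M.IsPath) (hMC : ∀ z ∈ M.support, z ∉ C.support) :
    ∃ (w : V) (c : G.Walk w w), c.IsCycle ∧ C.length < c.length := by
  obtain ⟨q, hq, hqlen, hqsupp, hqdarts⟩ := hC.exists_isPath_succ hu₁
  obtain ⟨p, t, rfl⟩ := mem_support_iff_exists_append.1 ((hqsupp u₂).2 hu₂)
  cases t with
  | nil => exact absurd rfl hne
  | @cons _ w _ huw t =>
    obtain rfl : w = C.succ u₂ :=
      hC.snd_eq_succ (d := ⟨(u₂, w), huw⟩) (hqdarts (by simp [darts_append]))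
    -- Pósa rotation of `q` at `u₂`: a path from `u₂` to `u₁` through all of `C`.
    let R := p.reverse.append (cons hsucc t)
    have hRC : ∀ z ∈ R.support, z ∈ C.support := fun z hz => (hqsupp z).1 (by
      simp only [R, mem_support_append_iff, support_reverse, List.mem_reverse, support_cons,
        List.mem_cons] at hz ⊢
      rcases hz with h | rfl | h
      exacts [Or.inl h, Or.inl p.start_mem_support, Or.inr (Or.inr h)])
    refine ⟨u₁, cons ha (M.append (cons hb R)),
      (hq.reverse_append_cons hsucc).isCycle_cons_append_cons hM
        (fun z hzM hzR => hMC z hzM (hRC z hzR)) hne.symm ha hb, ?_⟩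
    simp only [R, length_cons, length_append, length_reverse] at hqlen ⊢
    omega

lemma IsCycle.not_adj_succ_succ (hC : C.IsCycle)
    (hmax : ∀ (w : V) (c : G.Walk w w), c.IsCycle → c.length ≤ C.length) {v u₁ u₂ b : V}
    (hu₁ : u₁ ∈ G.vertexBoundary (G.componentAvoiding {z | z ∈ C.support} v))
    (hb : b ∈ G.componentAvoiding {z | z ∈ C.support} v) (hbu₂ : G.Adj b u₂)
    (hu₂ : u₂ ∈ C.support) (hne : u₁ ≠ u₂) : ¬ G.Adj (C.succ u₁) (C.succ u₂) := by
  intro hsucc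
  have hu₁C : u₁ ∈ C.support :=
    vertexBoundary_componentAvoiding_subset (S := {z | z ∈ C.support}) hu₁
  obtain ⟨-, a, ha, hu₁a⟩ := hu₁
  obtain ⟨M, hM, hMC⟩ := exists_isPath_of_mem_componentAvoiding ha hb
  obtain ⟨w, c, hc, hlt⟩ := hC.exists_longer_of_adj_succ hu₁C hu₂ hne hsucc hu₁a hbu₂ hM hMC
  exact (hmax w c hc).not_gt hlt

lemma IsCycle.not_adj_succ_of_mem_componentAvoiding (hC : C.IsCycle)
    (hmax : ∀ (w : V) (c : G.Walk w w), c.IsCycle → c.length ≤ C.length) {v u b : V}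
    (hu : u ∈ G.vertexBoundary (G.componentAvoiding {z | z ∈ C.support} v))
    (hb : b ∈ G.componentAvoiding {z | z ∈ C.support} v) : ¬ G.Adj (C.succ u) b := by
  have huC : u ∈ C.support :=
    vertexBoundary_componentAvoiding_subset (S := {z | z ∈ C.support}) hu
  exact fun hadj => hC.not_adj_succ_succ hmax hu hb hadj.symm (hC.succ_mem_support huC)
    (hC.adj_succ huC).ne (hC.adj_succ (hC.succ_mem_support huC))

lemma IsCycle.le_ncard_vertexBoundary_componentAvoiding {s : ℕ} {v : V} (hC : C.IsCycle)
    (hmax : ∀ (w : V) (c : G.Walk w w), c.IsCycle → c.length ≤ C.length)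
    (hG : SConnected G s) (hv : v ∉ C.support) :
    s ≤ (G.vertexBoundary (G.componentAvoiding {z | z ∈ C.support} v)).ncard := by
  have hvK : v ∈ G.componentAvoiding {z | z ∈ C.support} v := self_mem_componentAvoiding hv
  have hCK : ∀ z ∈ C.support, z ∉ G.componentAvoiding {z | z ∈ C.support} v :=
    fun z hz hzK => notMem_of_mem_componentAvoiding hzK hz
  by_cases hr : r ∈ G.vertexBoundary (G.componentAvoiding {z | z ∈ C.support} v)
  · have hrC : r ∈ C.support := C.start_mem_support
    exact hG.le_ncard_vertexBoundary hvK (hCK _ (hC.succ_mem_support hrC))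
      fun ⟨_, b, hb, hadj⟩ => hC.not_adj_succ_of_mem_componentAvoiding hmax hr hb hadj
  · exact hG.le_ncard_vertexBoundary hvK (hCK _ C.start_mem_support) hr

lemma IsCycle.mem_support_of_forall_length_le [Fintype V] {s : ℕ} (hC : C.IsCycle)
    (hmax : ∀ (w : V) (c : G.Walk w w), c.IsCycle → c.length ≤ C.length)
    (hG : SConnected G s) (hα : IndepBound G s) (v : V) : v ∈ C.support := by
  classical
  by_contra hv
  set K := G.componentAvoiding {z | z ∈ C.support} v
  set A := G.vertexBoundary K
  have hvK : v ∈ K := self_mem_componentAvoiding hv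
  have hAC : ∀ u ∈ A, u ∈ C.support := fun u hu =>
    vertexBoundary_componentAvoiding_subset (S := {z | z ∈ C.support}) hu
  have hsuccK : ∀ u ∈ A, ∀ b ∈ K, ¬ G.Adj (C.succ u) b := fun u hu b hb =>
    hC.not_adj_succ_of_mem_componentAvoiding hmax hu hb
  let B := insert v (A.toFinset.image C.succ)
  have hB : ∀ x ∈ B, ∀ y ∈ B, x ≠ y → ¬ G.Adj x y := by
    simp only [B, Finset.mem_insert, Finset.mem_image, Set.mem_toFinset]
    rintro x (rfl | ⟨u₁, hu₁, rfl⟩) y (rfl | ⟨u₂, hu₂, rfl⟩) hxy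
    · exact absurd rfl hxy
    · exact fun h => hsuccK u₂ hu₂ x hvK h.symm
    · exact hsuccK u₁ hu₁ y hvK
    · obtain ⟨b, hb, hu₂b⟩ := hu₂.2
      exact hC.not_adj_succ_succ hmax hu₁ hb hu₂b.symm (hAC u₂ hu₂) fun h => hxy (h ▸ rfl)
  have hBcard : B.card = A.ncard + 1 := by
    rw [Finset.card_insert_of_notMem, Finset.card_image_of_injOn, Set.ncard_eq_toFinset_card']
    · exact fun x hx y hy => hC.succ_injOn (hAC x (by simpa using hx)) (hAC y (by simpa using hy))
    · simp only [Finset.mem_image, Set.mem_toFinset, not_exists, not_and]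
      exact fun u hu h => hv (h ▸ hC.succ_mem_support (hAC u hu))
  have hsA : s ≤ A.ncard := hC.le_ncard_vertexBoundary_componentAvoiding hmax hG hv
  have := hα B hB
  omega

end Successor

end SimpleGraph.Walk

/-- Chvátal–Erdős: an s-connected graph with independence number at most s has a
Hamiltonian cycle. -/
theorem stmt_15 [Fintype V] [DecidableEq V] (G : SimpleGraph V) (s : ℕ) (hs : 1 ≤ s)
    (hcard : 3 ≤ Fintype.card V) (hG : SConnected G s) (hα : IndepBound G s) :
    ∃ a, ∃ p : G.Walk a a, p.IsHamiltonianCycle := by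
  classical
  have : Nontrivial V := Fintype.one_lt_card_iff_nontrivial.1 (by omega)
  obtain ⟨r, C, hC, hmax⟩ := exists_isCycle_forall_length_le <|
    (hG.connected hs).exists_isCycle_of_two_le_degree
      (two_le_degree_of_sConnected_of_indepBound hcard hG hα)
  exact ⟨r, C, hC.isHamiltonianCycle_of_forall_mem_support
    (hC.mem_support_of_forall_length_le hmax hG hα)⟩
end

section
/- Let G be an s-connected finite simple graph whose independence number is less than s. Then for every pair of distinct vertices u, v there is a Hamiltonian path from u to v. -/
/-!
Take a longest `u`–`v` path `p`. If it misses a vertex `w`, let `H` be the component of `w` in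
`G - V(p)` and `N` the set of vertices of `p` with a neighbour in `H`. Maximality of `p` forbids two
consecutive vertices of `p` in `N` (reroute the edge between them through `H`), and forbids an edge
between the successors of two vertices of `N` (reroute through `H` and run the segment between
them backwards). The first fact leaves a vertex of `p` outside `N`, which `N` separates from `w`,
so `|N| ≥ s`; the second makes `w` together with the successors of `N \ {v}` an independent set of
size at least `|N|`.
-/

open SimpleGraph

variable {V : Type*}

lemma SConnected.reachable {G : SimpleGraph V} {s : ℕ} (hG : SConnected G s) (hs : 0 < s)
    (u v : V) : G.Reachable u v :=
  ((hG.2 ∅ (by simpa)).preconnected ⟨u, by simp⟩ ⟨v, by simp⟩).map (Embedding.induce _).toHom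

lemma SConnected.le_ncard_of_forall_walk {G : SimpleGraph V} {s : ℕ} (hG : SConnected G s)
    {N : Set V} {a b : V} (ha : a ∉ N) (hb : b ∉ N)
    (hsep : ∀ W : G.Walk a b, ∃ t ∈ W.support, t ∈ N) :
    s ≤ N.ncard := by
  by_contra! hN
  obtain ⟨W⟩ := (hG.2 N hN).preconnected ⟨a, ha⟩ ⟨b, hb⟩
  have hW : ∀ t ∈ (W.map (Embedding.induce Nᶜ).toHom : G.Walk a b).support, t ∉ N := by
    intro t ht
    rw [Walk.support_map, List.mem_map] at ht
    obtain ⟨⟨t, htN⟩, -, rfl⟩ := ht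
    exact htN
  obtain ⟨t, ht, htN⟩ := hsep _
  exact hW t ht htN

namespace SimpleGraph

variable {G : SimpleGraph V} {u v w : V}

namespace Walk

lemma exists_eq_append_cons_of_mem_darts {p : G.Walk u v} {d : G.Dart} (hd : d ∈ p.darts) :
    ∃ (q : G.Walk u d.fst) (r : G.Walk d.snd v), p = q.append (cons d.adj r) := by
  obtain ⟨q, r, rfl⟩ := (isSubwalk_toWalk_adj_iff_mem_darts p).2 hd
  exact ⟨q, r, by simp [Adj.toWalk, ← append_assoc]⟩

lemma IsPath.isPath_and_length_lt_of_support_perm {a b : V} {p P : G.Walk u v} (hp : p.IsPath)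
    {R : G.Walk a b} (hR : R.IsPath) (hRp : ∀ z ∈ R.support, z ∉ p.support)
    (hperm : P.support.Perm (p.support ++ R.support)) : P.IsPath ∧ p.length < P.length := by
  refine ⟨(isPath_def _).2 (hperm.nodup_iff.2 ?_), ?_⟩
  · exact List.nodup_append.2 ⟨hp.support_nodup, hR.support_nodup,
      fun x hx y hy hxy => hRp y hy (hxy ▸ hx)⟩
  · have := hperm.length_eq
    simp only [List.length_append, length_support] at this
    omega

lemma IsPath.exists_longer_of_detour {x y a b : V} {q : G.Walk u x} {hxy : G.Adj x y}
    {r : G.Walk y v} (hp : (q.append (cons hxy r)).IsPath) (hxa : G.Adj x a) (hby : G.Adj b y)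
    {R : G.Walk a b} (hR : R.IsPath) (hRp : ∀ z ∈ R.support, z ∉ (q.append (cons hxy r)).support) :
    ∃ P : G.Walk u v, P.IsPath ∧ (q.append (cons hxy r)).length < P.length :=
  ⟨_, hp.isPath_and_length_lt_of_support_perm
    (P := q.append (cons hxa (R.append (cons hby r)))) hR hRp (by
      simp only [support_append, support_cons, List.tail_cons, List.append_assoc]
      exact List.perm_append_comm.append_left _)⟩

lemma IsPath.exists_longer_of_crossing {x y x' y' a b : V} {q : G.Walk u x} {hxy : G.Adj x y}
    {m : G.Walk y x'} {hx'y' : G.Adj x' y'} {r : G.Walk y' v}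
    (hp : (q.append (cons hxy (m.append (cons hx'y' r)))).IsPath)
    (hxa : G.Adj x a) (hbx' : G.Adj b x') (hyy' : G.Adj y y') {R : G.Walk a b} (hR : R.IsPath)
    (hRp : ∀ z ∈ R.support, z ∉ (q.append (cons hxy (m.append (cons hx'y' r)))).support) :
    ∃ P : G.Walk u v, P.IsPath ∧
      (q.append (cons hxy (m.append (cons hx'y' r)))).length < P.length :=
  ⟨_, hp.isPath_and_length_lt_of_support_perm
    (P := q.append (cons hxa (R.append (cons hbx' (m.reverse.append (cons hyy' r)))))) hR hRp (by
      simp only [support_append, support_cons, List.tail_cons, support_reverse, List.append_assoc]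
      refine List.Perm.append_left _ (List.perm_append_comm.trans ?_)
      simpa only [List.append_assoc] using (List.reverse_perm _).append_right _)⟩

lemma ncard_le_card_filter_darts_add_one [DecidableEq V] (p : G.Walk u v) {N : Set V}
    [DecidablePred (· ∈ N)] (hN : ∀ x ∈ N, x ∈ p.support) :
    N.ncard ≤ (p.darts.toFinset.filter (·.fst ∈ N)).card + 1 := by
  set D := p.darts.toFinset.filter (·.fst ∈ N)
  have hsub : N ⊆ ↑(insert v (D.image (·.fst))) := by
    intro x hx
    have hxp := hN x hx
    rw [← p.map_fst_darts_append, List.mem_append, List.mem_map, List.mem_singleton] at hxp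
    rcases hxp with ⟨d, hd, rfl⟩ | rfl
    · simp only [Finset.coe_insert, Finset.coe_image, Set.mem_insert_iff, Set.mem_image]
      exact Or.inr ⟨d, by simpa [D] using ⟨hd, hx⟩, rfl⟩
    · exact Finset.mem_insert_self _ _
  calc N.ncard ≤ (insert v (D.image (·.fst))).card := by
        rw [← Set.ncard_coe_finset]; exact Set.ncard_le_ncard hsub (Finset.finite_toSet _)
    _ ≤ (D.image (·.fst)).card + 1 := Finset.card_insert_le _ _
    _ ≤ D.card + 1 := by grw [Finset.card_image_le]

lemma IsPath.injOn_snd_darts {p : G.Walk u v} (hp : p.IsPath) :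
    Set.InjOn (·.snd) {d : G.Dart | d ∈ p.darts} := fun _ hd _ hd' h =>
  List.inj_on_of_nodup_map
    (by rw [p.map_snd_darts]; exact hp.support_nodup.sublist (List.tail_sublist _)) hd hd' h

end Walk

lemma exists_isPath_forall_length_le [Finite V] (h : G.Reachable u v) :
    ∃ p : G.Walk u v, p.IsPath ∧ ∀ q : G.Walk u v, q.IsPath → q.length ≤ p.length := by
  classical
  have := Fintype.ofFinite V
  obtain ⟨W⟩ := h
  have : Nonempty (G.Path u v) := ⟨W.toPath⟩
  obtain ⟨p, hp⟩ := Finite.exists_max fun p : G.Path u v => p.1.length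
  exact ⟨p.1, p.2, fun q hq => hp ⟨q, hq⟩⟩

/-- The vertex set of the component of `w` in `G - S`. -/
def reachableAvoiding (G : SimpleGraph V) (S : Set V) (w : V) : Set V :=
  {z | ∃ W : G.Walk w z, ∀ t ∈ W.support, t ∉ S}

def attachments (G : SimpleGraph V) (S : Set V) (w : V) : Set V :=
  {x ∈ S | ∃ h ∈ G.reachableAvoiding S w, G.Adj x h}

section Avoiding

variable {S : Set V}

lemma notMem_of_mem_reachableAvoiding {z : V} (hz : z ∈ G.reachableAvoiding S w) : z ∉ S :=
  let ⟨W, hW⟩ := hz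
  hW z W.end_mem_support

lemma mem_reachableAvoiding_self (hw : w ∉ S) : w ∈ G.reachableAvoiding S w :=
  ⟨.nil, by simpa⟩

lemma mem_reachableAvoiding_of_adj {z c : V} (hz : z ∈ G.reachableAvoiding S w) (hzc : G.Adj z c)
    (hc : c ∉ S) : c ∈ G.reachableAvoiding S w :=
  let ⟨W, hW⟩ := hz
  ⟨W.concat hzc, fun t ht => by
    rw [Walk.support_concat, List.mem_append, List.mem_singleton] at ht
    exact ht.elim (hW t) (· ▸ hc)⟩

lemma exists_isPath_of_mem_reachableAvoiding {a b : V} (ha : a ∈ G.reachableAvoiding S w)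
    (hb : b ∈ G.reachableAvoiding S w) :
    ∃ R : G.Walk a b, R.IsPath ∧ ∀ t ∈ R.support, t ∉ S := by
  classical
  obtain ⟨Wa, hWa⟩ := ha
  obtain ⟨Wb, hWb⟩ := hb
  refine ⟨(Wa.reverse.append Wb).bypass, Walk.bypass_isPath _, fun t ht => ?_⟩
  rcases (Walk.mem_support_append_iff _ _).1 (Walk.support_bypass_subset_support _ ht) with ht | ht
  · exact hWa t (by simpa using ht)
  · exact hWb t ht

lemma exists_mem_attachments_of_walk {z : V} (hw : w ∉ S) (hz : z ∉ G.reachableAvoiding S w)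
    (W : G.Walk w z) : ∃ t ∈ W.support, t ∈ G.attachments S w := by
  obtain ⟨d, hd, hfst, hsnd⟩ := W.exists_boundary_dart _ (mem_reachableAvoiding_self hw) hz
  refine ⟨d.snd, W.dart_snd_mem_support_of_mem_darts hd, ?_, d.fst, hfst, d.adj.symm⟩
  by_contra hS
  exact hsnd (mem_reachableAvoiding_of_adj hfst d.adj hS)

lemma exists_detour_of_mem_attachments {x y : V} (hx : x ∈ G.attachments S w)
    (hy : y ∈ G.attachments S w) :
    ∃ a b, G.Adj x a ∧ G.Adj b y ∧ ∃ R : G.Walk a b, R.IsPath ∧ ∀ t ∈ R.support, t ∉ S := by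
  obtain ⟨-, a, ha, hxa⟩ := hx
  obtain ⟨-, b, hb, hyb⟩ := hy
  obtain ⟨R, hR, hRS⟩ := exists_isPath_of_mem_reachableAvoiding ha hb
  exact ⟨a, b, hxa, hyb.symm, R, hR, hRS⟩

end Avoiding

section LongestPath

variable {p : G.Walk u v} (hp : p.IsPath)
  (hmax : ∀ q : G.Walk u v, q.IsPath → q.length ≤ p.length)
include hp hmax

lemma snd_notMem_attachments_of_mem_darts {d : G.Dart} (hd : d ∈ p.darts)
    (hx : d.fst ∈ G.attachments {t | t ∈ p.support} w) :
    d.snd ∉ G.attachments {t | t ∈ p.support} w := by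
  intro hy
  obtain ⟨a, b, hxa, hby, R, hR, hRp⟩ := exists_detour_of_mem_attachments hx hy
  obtain ⟨q, r, rfl⟩ := Walk.exists_eq_append_cons_of_mem_darts hd
  obtain ⟨P, hP, hlt⟩ := hp.exists_longer_of_detour hxa hby hR hRp
  exact (hmax P hP).not_gt hlt

lemma not_adj_snd_of_mem_darts {d d' : G.Dart} (hd : d ∈ p.darts) (hd' : d' ∈ p.darts)
    (hne : d ≠ d') (hx : d.fst ∈ G.attachments {t | t ∈ p.support} w)
    (hx' : d'.fst ∈ G.attachments {t | t ∈ p.support} w) : ¬ G.Adj d.snd d'.snd := by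
  intro hadj
  obtain ⟨q, r, rfl⟩ := Walk.exists_eq_append_cons_of_mem_darts hd
  rw [Walk.darts_append, Walk.darts_cons, List.mem_append, List.mem_cons] at hd'
  rcases hd' with hd' | rfl | hd'
  · obtain ⟨q, m, rfl⟩ := Walk.exists_eq_append_cons_of_mem_darts hd'
    rw [← Walk.append_assoc, Walk.cons_append] at hp hmax hx hx'
    obtain ⟨a, b, hxa, hbx, R, hR, hRp⟩ := exists_detour_of_mem_attachments hx' hx
    obtain ⟨P, hP, hlt⟩ := hp.exists_longer_of_crossing hxa hbx hadj.symm hR hRp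
    exact (hmax P hP).not_gt hlt
  · exact hne rfl
  · obtain ⟨m, r, rfl⟩ := Walk.exists_eq_append_cons_of_mem_darts hd'
    obtain ⟨a, b, hxa, hbx, R, hR, hRp⟩ := exists_detour_of_mem_attachments hx hx'
    obtain ⟨P, hP, hlt⟩ := hp.exists_longer_of_crossing hxa hbx hadj hR hRp
    exact (hmax P hP).not_gt hlt

lemma le_ncard_attachments {s : ℕ} (hG : SConnected G s) (huv : u ≠ v) (hw : w ∉ p.support) :
    s ≤ (G.attachments {t | t ∈ p.support} w).ncard := by
  obtain ⟨d, hd⟩ : ∃ d, d ∈ p.darts := ⟨_, p.firstDart_mem_darts (Walk.not_nil_of_ne huv)⟩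
  obtain ⟨z, hz, hzA⟩ : ∃ z ∈ p.support, z ∉ G.attachments {t | t ∈ p.support} w := by
    by_cases hx : d.fst ∈ G.attachments {t | t ∈ p.support} w
    · exact ⟨_, p.dart_snd_mem_support_of_mem_darts hd,
        snd_notMem_attachments_of_mem_darts hp hmax hd hx⟩
    · exact ⟨_, p.dart_fst_mem_support_of_mem_darts hd, hx⟩
  exact hG.le_ncard_of_forall_walk (fun h => hw h.1) hzA
    (exists_mem_attachments_of_walk hw fun h => notMem_of_mem_reachableAvoiding h hz)

lemma exists_isIndepSet_ncard_attachments_le (hw : w ∉ p.support) :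
    ∃ T : Finset V, G.IsIndepSet T ∧ (G.attachments {t | t ∈ p.support} w).ncard ≤ T.card := by
  classical
  set A := G.attachments {t | t ∈ p.support} w
  set D := p.darts.toFinset.filter (·.fst ∈ A)
  have hwD : w ∉ D.image (·.snd) := by
    simp only [Finset.mem_image]
    rintro ⟨d, hd, rfl⟩
    exact hw (p.dart_snd_mem_support_of_mem_darts (List.mem_toFinset.1 (Finset.mem_filter.1 hd).1))
  refine ⟨insert w (D.image (·.snd)), ?_, ?_⟩
  · have hmemD : ∀ d ∈ D, d ∈ p.darts ∧ d.fst ∈ A := by simp [D]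
    have hw_adj : ∀ d ∈ D, ¬ G.Adj w d.snd := fun d hd hadj =>
      snd_notMem_attachments_of_mem_darts hp hmax (hmemD d hd).1 (hmemD d hd).2
        ⟨p.dart_snd_mem_support_of_mem_darts (hmemD d hd).1, w, mem_reachableAvoiding_self hw,
          hadj.symm⟩
    intro a ha b hb hab hadj
    simp only [Finset.coe_insert, Finset.coe_image, Set.mem_insert_iff, Set.mem_image,
      Finset.mem_coe] at ha hb
    rcases ha with rfl | ⟨d, hd, rfl⟩ <;> rcases hb with rfl | ⟨d', hd', rfl⟩
    · exact hab rfl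
    · exact hw_adj d' hd' hadj
    · exact hw_adj d hd hadj.symm
    · exact not_adj_snd_of_mem_darts hp hmax (hmemD d hd).1 (hmemD d' hd').1
        (fun h => hab (h ▸ rfl)) (hmemD d hd).2 (hmemD d' hd').2 hadj
  · calc A.ncard ≤ D.card + 1 := p.ncard_le_card_filter_darts_add_one fun _ hx => hx.1
      _ = _ := by
        rw [Finset.card_insert_of_notMem hwD, Finset.card_image_of_injOn]
        exact hp.injOn_snd_darts.mono fun d hd => by simpa [D] using (Finset.mem_filter.1 hd).1

end LongestPath

end SimpleGraph

theorem stmt_16_general [Fintype V] [DecidableEq V] (G : SimpleGraph V) (s : ℕ)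
    (hG : SConnected G s)
    (hα : ∀ t : Finset V, (∀ a ∈ t, ∀ b ∈ t, a ≠ b → ¬ G.Adj a b) → t.card < s) :
    ∀ u v : V, u ≠ v → HasHamPathBetween G u v := by
  intro u v huv
  obtain ⟨p, hp, hmax⟩ := exists_isPath_forall_length_le (hG.reachable (hα ∅ (by simp)) u v)
  by_cases hfull : ∀ w, w ∈ p.support
  · exact ⟨p, hp.isHamiltonian_of_mem hfull⟩
  obtain ⟨w, hw⟩ := not_forall.1 hfull
  obtain ⟨T, hT, hcard⟩ := exists_isIndepSet_ncard_attachments_le hp hmax hw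
  have := hα T fun a ha b hb hab => hT ha hb hab
  have := (le_ncard_attachments hp hmax hG huv hw).trans hcard
  omega

/-- Chvátal–Erdős: an s-connected graph with independence number less than s is
Hamiltonian connected. -/
theorem stmt_16 [Fintype V] [DecidableEq V] (G : SimpleGraph V) (s : ℕ) (hs : 2 ≤ s)
    (hG : SConnected G s)
    (hα : ∀ t : Finset V, (∀ a ∈ t, ∀ b ∈ t, a ≠ b → ¬ G.Adj a b) → t.card < s) :
    ∀ u v : V, u ≠ v → HasHamPathBetween G u v :=
  stmt_16_general G s hG hα
end

section
/- Let G be a disconnected finite simple graph with independence number at most 3 and let u, v be vertices of G. Then V(G) can be partitioned into two vertex-disjoint paths, one starting at u and the other at v, if and only if G has exactly 2 connected components, u and v lie in different components, and neither u nor v is a cut vertex of its own component. -/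
/-!
A connected graph `H` with independence number at most 2 has a Hamiltonian path from every
vertex `u` that is not a cut vertex. By induction `H - u`, which is connected with independence
number at most 2, has a Hamiltonian path `P`. If `u` is adjacent to an end of `P`, prepend `u`;
otherwise the two ends of `P` are adjacent, since together with `u` they would be an independent
set of size 3, so `P` closes to a cycle, which can be reopened at a neighbour of `u`. Conversely
the first vertex of a Hamiltonian path is never a cut vertex.

In a disconnected graph with independence number at most 3 every component has independence
number at most 2, because a vertex outside it extends any of its independent sets. A path cover
from `u` and `v` puts `u` and `v` into different components (otherwise everything would be
reachable from `u`), so each path is a Hamiltonian path of its own component, and these two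
components are all of `G`.
-/

open SimpleGraph

variable {V : Type*}

variable {W : Type*} {H : SimpleGraph W}

namespace SimpleGraph.Walk

theorem IsCycle.exists_isPath_from_of_mem_support [DecidableEq W] {v z : W}
    {c : H.Walk v v} (hc : c.IsCycle) (hz : z ∈ c.support) :
    ∃ (w : W) (q : H.Walk z w), q.IsPath ∧ ∀ y, y ∈ q.support ↔ y ∈ c.support := by
  have hnil : ¬ (c.rotate z hz).Nil := (hc.rotate hz).not_nil
  refine ⟨_, (c.rotate z hz).dropLast, (hc.rotate hz).isPath_dropLast, fun y => ?_⟩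
  refine Iff.trans ?_ (mem_support_rotate_iff c z hz)
  rw [← support_dropLast_concat hnil, List.mem_append, List.mem_singleton]
  refine ⟨Or.inl, ?_⟩
  rintro (h | rfl)
  exacts [h, start_mem_support _]

theorem IsPath.isHamiltonian_cons [DecidableEq W] {x z w : W} {q : H.Walk z w} (hq : q.IsPath)
    (hsupp : ∀ y, y ∈ q.support ↔ y ≠ x) (h : H.Adj x z) : (cons h q).IsHamiltonian := by
  refine (hq.cons fun hx => (hsupp x).1 hx rfl).isHamiltonian_of_mem fun y => ?_
  rw [support_cons, List.mem_cons, hsupp]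
  exact eq_or_ne y x

theorem IsHamiltonian.mem_support_map_induce [DecidableEq W] {A : Set W} {a b : A}
    {p : (H.induce A).Walk a b} (hp : p.IsHamiltonian) (w : W) :
    w ∈ (p.map (Embedding.induce A).toHom).support ↔ w ∈ A := by
  rw [support_map, List.mem_map]
  exact ⟨fun ⟨c, _, hc⟩ => hc ▸ c.2, fun hw => ⟨⟨w, hw⟩, hp.mem_support _, rfl⟩⟩

theorem IsHamiltonian.not_isCutVertex [DecidableEq W] {u a : W} {p : H.Walk u a}
    (hp : p.IsHamiltonian) : ¬ IsCutVertex H u := by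
  rw [IsCutVertex, not_not]
  cases p with
  | nil =>
    have : IsEmpty ({u}ᶜ : Set W) := ⟨fun c => c.2 (by simpa using hp.mem_support c.1)⟩
    exact .of_subsingleton
  | cons h q =>
    have hu : u ∉ q.support := ((cons_isPath_iff h q).1 hp.isPath).2
    have hq : {y | y ∈ q.support} = {u}ᶜ := by
      ext y
      have hy := hp.mem_support y
      rw [support_cons, List.mem_cons] at hy
      exact ⟨fun hyq hyu => hu (hyu ▸ hyq), fun hyu => hy.resolve_left hyu⟩
    exact (hq ▸ q.connected_induce_support).preconnected

theorem IsPath.not_isCutVertex_of_support {u a : W} {p : H.Walk u a} (hp : p.IsPath)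
    (hsupp : ∀ w, w ∈ p.support ↔ H.connectedComponentMk w = H.connectedComponentMk u) :
    ¬ IsCutVertex (H.induce (H.connectedComponentMk u).supp) ⟨u, rfl⟩ := by
  classical
  have hsupp' : ∀ w, w ∈ p.support ↔ w ∈ (H.connectedComponentMk u).supp :=
    fun w => (hsupp w).trans (ConnectedComponent.mem_supp_iff _ _).symm
  have hp' : (p.induce _ fun w => (hsupp' w).1).IsPath := by
    rw [← isPath_map_iff_of_injective (f := (Embedding.induce _).toHom) Subtype.val_injective,
      map_induce]
    exact hp
  refine IsHamiltonian.not_isCutVertex (hp'.isHamiltonian_of_mem fun w => ?_)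
  simpa using (hsupp' w).2 w.2

theorem connectedComponentMk_eq_of_mem_support {u a w : W} (p : H.Walk u a)
    (hw : w ∈ p.support) : H.connectedComponentMk w = H.connectedComponentMk u := by
  classical
  exact ConnectedComponent.sound ⟨(p.takeUntil w hw).reverse⟩

theorem mem_support_iff_of_cover {x y a b : W} (p : H.Walk x a) (q : H.Walk y b)
    (hcover : ∀ w, w ∈ p.support ∨ w ∈ q.support)
    (hxy : H.connectedComponentMk x ≠ H.connectedComponentMk y) (w : W) :
    w ∈ p.support ↔ H.connectedComponentMk w = H.connectedComponentMk x :=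
  ⟨p.connectedComponentMk_eq_of_mem_support, fun hw => (hcover w).resolve_right fun hq =>
    hxy (hw.symm.trans (q.connectedComponentMk_eq_of_mem_support hq))⟩

end SimpleGraph.Walk

theorem SimpleGraph.card_connectedComponent_eq_two_iff {u v : W}
    (huv : H.connectedComponentMk u ≠ H.connectedComponentMk v) :
    Nat.card H.ConnectedComponent = 2 ↔ ∀ w,
      H.connectedComponentMk w = H.connectedComponentMk u ∨
        H.connectedComponentMk w = H.connectedComponentMk v := by
  rw [Nat.card_eq_two_iff' (H.connectedComponentMk u)]
  constructor
  · rintro ⟨C, -, huniq⟩ w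
    exact or_iff_not_imp_left.2 fun hw => (huniq _ hw).trans (huniq _ huv.symm).symm
  · intro h
    refine ⟨_, huv.symm, fun C hC => ?_⟩
    induction C using ConnectedComponent.ind with
    | h w => exact (h w).resolve_left hC

namespace IndepBound

theorem induce {k : ℕ} (hα : IndepBound H k) (A : Set W) : IndepBound (H.induce A) k := by
  classical
  intro s hs
  simpa using hα (s.map (Function.Embedding.subtype _)) fun c hc d hd hcd => by
    simp only [Finset.mem_map, Function.Embedding.coe_subtype] at hc hd
    obtain ⟨c', hc', rfl⟩ := hc
    obtain ⟨d', hd', rfl⟩ := hd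
    exact hs c' hc' d' hd' (fun h => hcd (congrArg _ h))

theorem induce_of_forall_not_adj {k : ℕ} (hα : IndepBound H (k + 1)) {A : Set W} {w : W}
    (hw : w ∉ A) (hwA : ∀ a ∈ A, ¬ H.Adj w a) : IndepBound (H.induce A) k := by
  classical
  intro s hs
  have hws : w ∉ s.map (Function.Embedding.subtype _) := fun h => by
    obtain ⟨c, -, rfl⟩ := Finset.mem_map.1 h
    exact hw c.2
  have := hα (insert w (s.map (Function.Embedding.subtype _))) fun c hc d hd hcd => by
    simp only [Finset.mem_insert, Finset.mem_map, Function.Embedding.coe_subtype] at hc hd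
    rcases hc with rfl | ⟨c, hc, rfl⟩ <;> rcases hd with rfl | ⟨d, hd, rfl⟩
    · exact absurd rfl hcd
    · exact hwA d d.2
    · exact fun h => hwA c c.2 h.symm
    · exact hs c hc d hd (fun h => hcd (congrArg _ h))
  rw [Finset.card_insert_of_notMem hws, Finset.card_map] at this
  omega

theorem adj_of_not_adj (hα : IndepBound H 2) {x a b : W} (hxa : x ≠ a) (hxb : x ≠ b)
    (hab : a ≠ b) (ha : ¬ H.Adj x a) (hb : ¬ H.Adj x b) : H.Adj a b := by
  classical
  by_contra h
  have hcard : ({x, a, b} : Finset W).card = 3 :=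
    Finset.card_eq_three.2 ⟨x, a, b, hxa, hxb, hab, rfl⟩
  have := hα {x, a, b} fun c hc d hd hcd => by
    simp only [Finset.mem_insert, Finset.mem_singleton] at hc hd
    rcases hc with rfl | rfl | rfl <;> rcases hd with rfl | rfl | rfl <;> simp_all [adj_comm]
  omega

theorem hasHamPathFrom_of_isPath [DecidableEq W] (hα : IndepBound H 2) {x z a b : W}
    {p : H.Walk a b} (hp : p.IsPath) (hsupp : ∀ y, y ∈ p.support ↔ y ≠ x)
    (hxz : H.Adj x z) : HasHamPathFrom H x := by
  have hz : z ∈ p.support := (hsupp z).2 hxz.ne'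
  by_cases ha : H.Adj x a
  · exact ⟨b, _, hp.isHamiltonian_cons hsupp ha⟩
  by_cases hb : H.Adj x b
  · exact ⟨a, _, hp.reverse.isHamiltonian_cons (by simpa using hsupp) hb⟩
  have hab : a ≠ b := by
    rintro rfl
    rw [Walk.nil_iff_support_eq.1 (Walk.isPath_iff_nil.1 hp), List.mem_singleton] at hz
    exact ha (hz ▸ hxz)
  have hxa : x ≠ a := ((hsupp a).1 p.start_mem_support).symm
  have hxb : x ≠ b := ((hsupp b).1 p.end_mem_support).symm
  have hba : H.Adj b a := (hα.adj_of_not_adj hxa hxb hab ha hb).symm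
  have hcyc : (Walk.cons hba p).IsCycle := by
    refine (Walk.cons_isCycle_iff p hba).2 ⟨hp, fun he => ?_⟩
    rw [hp.eq_adj_toWalk_of_mem_edges (Sym2.eq_swap ▸ he)] at hz
    simp only [Walk.support_cons, Walk.support_nil, List.mem_cons, List.not_mem_nil,
      or_false] at hz
    rcases hz with rfl | rfl
    exacts [ha hxz, hb hxz]
  obtain ⟨w, q, hq, hqsupp⟩ :=
    hcyc.exists_isPath_from_of_mem_support (z := z) (List.mem_cons_of_mem _ hz)
  refine ⟨w, _, hq.isHamiltonian_cons (fun y => ?_) hxz⟩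
  rw [hqsupp, Walk.support_cons, List.mem_cons, hsupp]
  exact or_iff_right_of_imp fun hy => hy ▸ hxb.symm

theorem hasHamPathFrom [Finite W] [DecidableEq W] (hc : H.Connected) (hα : IndepBound H 2)
    {u : W} (hu : ¬ IsCutVertex H u) : HasHamPathFrom H u := by
  induction hn : Nat.card W using Nat.strong_induction_on generalizing W with
  | _ n ih =>
  rcases subsingleton_or_nontrivial W with hW | hW
  · exact ⟨u, .nil, .of_subsingleton⟩
  obtain ⟨z, huz⟩ := hc.preconnected.exists_adj_of_nontrivial u
  have : Nonempty ({u}ᶜ : Set W) := ⟨⟨z, huz.ne'⟩⟩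
  have hconn : (H.induce {u}ᶜ).Connected := ⟨not_not.1 hu⟩
  obtain ⟨x, hx⟩ := hconn.exists_preconnected_induce_compl_singleton_of_finite
  have hlt : Nat.card ({u}ᶜ : Set W) < n := hn ▸ Finite.card_subtype_lt (x := u) (by simp)
  obtain ⟨b, p, hp⟩ := ih _ hlt hconn (hα.induce _) (not_not.2 hx) rfl
  exact hα.hasHamPathFrom_of_isPath
    (hp.isPath.map (f := (Embedding.induce _).toHom) Subtype.val_injective)
    hp.mem_support_map_induce huz

theorem exists_isPath_support_of_not_isCutVertex [Finite W] [DecidableEq W]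
    (hα : IndepBound H 3) {u v : W} (huv : H.connectedComponentMk u ≠ H.connectedComponentMk v)
    (hu : ¬ IsCutVertex (H.induce (H.connectedComponentMk u).supp) ⟨u, rfl⟩) :
    ∃ (a : W) (p : H.Walk u a), p.IsPath ∧
      ∀ w, w ∈ p.support ↔ H.connectedComponentMk w = H.connectedComponentMk u := by
  have hv : v ∉ (H.connectedComponentMk u).supp := fun h => huv h.symm
  have hvC : ∀ w ∈ (H.connectedComponentMk u).supp, ¬ H.Adj v w := fun w hw hvw =>
    huv ((ConnectedComponent.connectedComponentMk_eq_of_adj hvw).trans hw).symm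
  obtain ⟨b, p, hp⟩ := (hα.induce_of_forall_not_adj hv hvC).hasHamPathFrom
    (H.connectedComponentMk u).connected_toSimpleGraph hu
  exact ⟨b, _, hp.isPath.map (f := (Embedding.induce _).toHom) Subtype.val_injective,
    fun w => (hp.mem_support_map_induce w).trans (ConnectedComponent.mem_supp_iff _ _)⟩

end IndepBound

/-- A disconnected graph with independence number at most 3 has a path cover PC(u,v) iff
it has exactly 2 components, u and v are in different components, and neither u nor v is
a cut vertex of its own component. -/
theorem stmt_18 [Fintype V] [DecidableEq V] (G : SimpleGraph V)
    (hdisc : ¬ G.Connected) (hα : IndepBound G 3) (u v : V) :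
    HasPathCover2 G u v ↔
      Nat.card G.ConnectedComponent = 2 ∧
      G.connectedComponentMk u ≠ G.connectedComponentMk v ∧
      ¬ IsCutVertex (G.induce (G.connectedComponentMk u).supp) ⟨u, rfl⟩ ∧
      ¬ IsCutVertex (G.induce (G.connectedComponentMk v).supp) ⟨v, rfl⟩ := by
  constructor
  · rintro ⟨a, b, p, q, hp, hq, hpart⟩
    have hcover (w : V) : w ∈ p.support ∨ w ∈ q.support := (hpart w).imp And.left And.left
    have huv : G.connectedComponentMk u ≠ G.connectedComponentMk v := by
      intro h
      refine hdisc ((connected_iff_exists_forall_reachable G).2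
        ⟨u, fun w => ConnectedComponent.exact ?_⟩)
      rcases hcover w with hw | hw
      · exact (p.connectedComponentMk_eq_of_mem_support hw).symm
      · exact h.trans (q.connectedComponentMk_eq_of_mem_support hw).symm
    refine ⟨(card_connectedComponent_eq_two_iff huv).2 fun w => (hcover w).imp
      p.connectedComponentMk_eq_of_mem_support q.connectedComponentMk_eq_of_mem_support, huv,
      hp.not_isCutVertex_of_support (p.mem_support_iff_of_cover q hcover huv),
      hq.not_isCutVertex_of_support (q.mem_support_iff_of_cover p (fun w => (hcover w).symm)
        huv.symm)⟩
  · rintro ⟨hcard, huv, hu, hv⟩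
    obtain ⟨a, p, hp, hpC⟩ := hα.exists_isPath_support_of_not_isCutVertex huv hu
    obtain ⟨b, q, hq, hqC⟩ := hα.exists_isPath_support_of_not_isCutVertex huv.symm hv
    refine ⟨a, b, p, q, hp, hq, fun w => ?_⟩
    rw [hpC, hqC]
    rcases (card_connectedComponent_eq_two_iff huv).1 hcard w with h | h
    · exact .inl ⟨h, h ▸ huv⟩
    · exact .inr ⟨h, h ▸ huv.symm⟩
end
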